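/- arXiv:1805.04064 — 3 statements merged into one kernel-verified Lean document; each statement's English description precedes it below -/
import Mathlib

section
/- Let a be a positive integer and let b₁,…,b₇ be nonnegative integers such that a² − (b₁² + b₂² + ⋯ + b₇²) = 2 and b₁ + b₂ + ⋯ + b₇ ≥ 3a − 2. Then a = 3 and bᵢ = 1 for every i = 1,…,7. -/
set_option maxHeartbeats 4000000 in
/-- Numerical core of Lemma 3.1: if `a > 0`, `bᵢ ≥ 0`,
`a² − Σ bᵢ² = 2` and `Σ bᵢ ≥ 3a − 2`, then `a = 3` and all `bᵢ = 1`. -/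
theorem stmt_0 (a : ℤ) (b : Fin 7 → ℤ) (ha : 0 < a) (hb : ∀ i, 0 ≤ b i)
    (hdeg : a ^ 2 - ∑ i, (b i) ^ 2 = 2) (hdim : ∑ i, b i ≥ 3 * a - 2) :
    a = 3 ∧ ∀ i, b i = 1 := by
  simp only [Fin.sum_univ_seven] at hdeg hdim
  have h0 := hb 0; have h1 := hb 1; have h2 := hb 2; have h3 := hb 3
  have h4 := hb 4; have h5 := hb 5; have h6 := hb 6
  -- Cauchy–Schwarz: (Σb)² ≤ 7 Σb²
  have hid : 7 * ((b 0)^2 + (b 1)^2 + (b 2)^2 + (b 3)^2 + (b 4)^2 + (b 5)^2 + (b 6)^2)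
      - (b 0 + b 1 + b 2 + b 3 + b 4 + b 5 + b 6)^2 = (b 0 - b 1)^2 + (b 0 - b 2)^2 + (b 0 - b 3)^2 + (b 0 - b 4)^2 + (b 0 - b 5)^2 + (b 0 - b 6)^2 + (b 1 - b 2)^2 + (b 1 - b 3)^2 + (b 1 - b 4)^2 + (b 1 - b 5)^2 + (b 1 - b 6)^2 + (b 2 - b 3)^2 + (b 2 - b 4)^2 + (b 2 - b 5)^2 + (b 2 - b 6)^2 + (b 3 - b 4)^2 + (b 3 - b 5)^2 + (b 3 - b 6)^2 + (b 4 - b 5)^2 + (b 4 - b 6)^2 + (b 5 - b 6)^2 := by ring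
  have hpos : (0:ℤ) ≤ (b 0 - b 1)^2 + (b 0 - b 2)^2 + (b 0 - b 3)^2 + (b 0 - b 4)^2 + (b 0 - b 5)^2 + (b 0 - b 6)^2 + (b 1 - b 2)^2 + (b 1 - b 3)^2 + (b 1 - b 4)^2 + (b 1 - b 5)^2 + (b 1 - b 6)^2 + (b 2 - b 3)^2 + (b 2 - b 4)^2 + (b 2 - b 5)^2 + (b 2 - b 6)^2 + (b 3 - b 4)^2 + (b 3 - b 5)^2 + (b 3 - b 6)^2 + (b 4 - b 5)^2 + (b 4 - b 6)^2 + (b 5 - b 6)^2 := by positivity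
  have hcs : (b 0 + b 1 + b 2 + b 3 + b 4 + b 5 + b 6)^2 ≤
      7 * ((b 0)^2 + (b 1)^2 + (b 2)^2 + (b 3)^2 + (b 4)^2 + (b 5)^2 + (b 6)^2) := by
    linarith [hid, hpos]
  have hexp : (3*a-2)^2 = 9*a^2 - 12*a + 4 := by ring
  have hexp2 : (a-3)^2 = a^2 - 6*a + 9 := by ring
  have hspos : (0:ℤ) ≤ 3*a - 2 := by linarith
  have h1 : (3*a-2)^2 ≤ (b 0 + b 1 + b 2 + b 3 + b 4 + b 5 + b 6)^2 :=
    pow_le_pow_left₀ hspos hdim 2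
  have hsq : (0:ℤ) ≤ (a-3)^2 := sq_nonneg _
  have hsq0 : (a-3)^2 ≤ 0 := by linarith
  have ha3 : a = 3 := by
    have : (a-3)^2 = 0 := le_antisymm hsq0 hsq
    have := pow_eq_zero_iff (n := 2) (by norm_num) |>.mp this
    linarith
  subst ha3
  have hbl : ∀ i : Fin 7, b i ≤ (b i)^2 := by
    intro i
    rcases (hb i).lt_or_eq with h | h
    · have h1 : 1 ≤ b i := h
      calc b i = b i * 1 := by ring
        _ ≤ b i * b i := by exact mul_le_mul_of_nonneg_left h1 (hb i)
        _ = (b i)^2 := by ring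
    · simp [← h]
  have e0 := hbl 0; have e1 := hbl 1; have e2 := hbl 2; have e3 := hbl 3
  have e4 := hbl 4; have e5 := hbl 5; have e6 := hbl 6
  have eq0 : (b 0)^2 = b 0 := by linarith
  have eq1 : (b 1)^2 = b 1 := by linarith
  have eq2 : (b 2)^2 = b 2 := by linarith
  have eq3 : (b 3)^2 = b 3 := by linarith
  have eq4 : (b 4)^2 = b 4 := by linarith
  have eq5 : (b 5)^2 = b 5 := by linarith
  have eq6 : (b 6)^2 = b 6 := by linarith
  have hone : ∀ i : Fin 7, b i = 0 ∨ b i = 1 := by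
    intro i
    have h : (b i)^2 = b i := by fin_cases i <;> assumption
    have : b i * (b i - 1) = 0 := by linear_combination h
    rcases mul_eq_zero.mp this with h' | h'
    · exact Or.inl h'
    · exact Or.inr (by linarith)
  have hle : ∀ i : Fin 7, b i ≤ 1 := fun i => by rcases hone i with h | h <;> omega
  have l0 := hle 0; have l1 := hle 1; have l2 := hle 2; have l3 := hle 3
  have l4 := hle 4; have l5 := hle 5; have l6 := hle 6
  refine ⟨rfl, fun i => ?_⟩
  fin_cases i
  · show b 0 = 1; omega
  · show b 1 = 1; omega
  · show b 2 = 1; omega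
  · show b 3 = 1; omega
  · show b 4 = 1; omega
  · show b 5 = 1; omega
  · show b 6 = 1; omega
end

section
/- Let a ≥ 1 be an integer and let b₁,…,b₇ be nonnegative integers. Then b₁² + ⋯ + b₇² = a² and b₁ + ⋯ + b₇ = 3a − 2 hold if and only if there is a permutation σ of {1,…,7} such that (a; b_{σ(1)},…,b_{σ(7)}) is one of the following five tuples: (1; 1,0,0,0,0,0,0), (2; 1,1,1,1,0,0,0), (3; 2,1,1,1,1,1,0), (4; 2,2,2,1,1,1,1), (5; 2,2,2,2,2,2,1). -/
/-!
Cauchy–Schwarz gives `(3a - 2)² ≤ 7a²`, so `a ≤ 5`, while `Σ bᵢ ≥ 0` forces `a ≥ 1`.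
The quantities `Σ bᵢ(bᵢ - 1) = (a - 1)(a - 2)` and `Σ (bᵢ - 1)(bᵢ - 2) = (a - 4)(a - 5)` are sums
of nonnegative integers. For `a ∈ {1, 2}` the first vanishes, so every `bᵢ ∈ {0, 1}`; for
`a ∈ {4, 5}` the second does, so every `bᵢ ∈ {1, 2}`; in both cases `Σ bᵢ` fixes the tuple up to
order. For `a = 3` both sums equal `2`, which leaves room for exactly one `2` and one `0`.
-/

open Finset

theorem Tuple.exists_perm_antitone {α : Type*} [LinearOrder α] {n : ℕ} (f : Fin n → α) :
    ∃ σ : Equiv.Perm (Fin n), Antitone (f ∘ σ) :=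
  ⟨Fin.revPerm.trans (Tuple.sort f), (Tuple.monotone_sort f).comp_antitone Fin.rev_anti⟩

theorem Fin.forall_fin_seven {P : Fin 7 → Prop} :
    (∀ i, P i) ↔ P 0 ∧ P 1 ∧ P 2 ∧ P 3 ∧ P 4 ∧ P 5 ∧ P 6 := by
  simp [Fin.forall_fin_succ]

theorem Fin.antitone_iff_seven {α : Type*} [Preorder α] {f : Fin 7 → α} :
    Antitone f ↔ f 1 ≤ f 0 ∧ f 2 ≤ f 1 ∧ f 3 ≤ f 2 ∧ f 4 ≤ f 3 ∧ f 5 ≤ f 4 ∧ f 6 ≤ f 5 := by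
  simp [Fin.antitone_iff_succ_le, Fin.forall_fin_succ]

theorem Int.mul_sub_one_nonneg (x : ℤ) : 0 ≤ x * (x - 1) := by
  nlinarith [Int.le_self_sq x]

theorem Int.mem_Icc_of_sum_mul_sub_one_eq_zero {ι : Type*} {s : Finset ι} {f : ι → ℤ}
    (h : ∑ i ∈ s, f i * (f i - 1) = 0) {i : ι} (hi : i ∈ s) : 0 ≤ f i ∧ f i ≤ 1 := by
  have := (sum_eq_zero_iff_of_nonneg fun j _ ↦ (f j).mul_sub_one_nonneg).mp h i hi
  rcases mul_eq_zero.mp this with h0 | h1 <;> omega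

/-- For `D = a H - Σ bᵢ Eᵢ` on the blow-up of `ℙ²` at `n` points: `D² = 0` and `-K · D = 2`. -/
def IsConicClass {n : ℕ} (a : ℤ) (b : Fin n → ℤ) : Prop :=
  ∑ i, b i ^ 2 = a ^ 2 ∧ ∑ i, b i = 3 * a - 2

namespace IsConicClass

section

variable {n : ℕ} {a : ℤ} {b : Fin n → ℤ}

theorem comp_perm_iff (σ : Equiv.Perm (Fin n)) :
    IsConicClass a (b ∘ σ) ↔ IsConicClass a b := by
  simp only [IsConicClass, Function.comp_apply, Equiv.sum_comp σ (fun i ↦ b i ^ 2),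
    Equiv.sum_comp σ b]

theorem one_le (h : IsConicClass a b) (hb : ∀ i, 0 ≤ b i) : 1 ≤ a := by
  have := h.2 ▸ sum_nonneg fun i _ ↦ hb i
  omega

theorem sum_mul_sub_one (h : IsConicClass a b) :
    ∑ i, b i * (b i - 1) = (a - 1) * (a - 2) := by
  simp only [mul_sub, mul_one, sum_sub_distrib, ← sq, h.1, h.2]
  ring

theorem mem_Icc_zero_one (h : IsConicClass a b) (ha : a = 1 ∨ a = 2) (i : Fin n) :
    0 ≤ b i ∧ b i ≤ 1 :=
  Int.mem_Icc_of_sum_mul_sub_one_eq_zero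
    (h.sum_mul_sub_one.trans (by rcases ha with rfl | rfl <;> rfl)) (mem_univ i)

end

variable {a : ℤ} {b : Fin 7 → ℤ}

theorem le_five (h : IsConicClass a b) : a ≤ 5 := by
  have := sq_sum_le_card_mul_sum_sq (s := univ) (f := b)
  rw [h.1, h.2, card_univ, Fintype.card_fin, Nat.cast_ofNat] at this
  nlinarith

theorem sum_sub_one_mul_sub_two (h : IsConicClass a b) :
    ∑ i, (b i - 1) * (b i - 2) = (a - 4) * (a - 5) := by
  have e : ∀ i, (b i - 1) * (b i - 2) = b i ^ 2 - 3 * b i + 2 := fun i ↦ by ring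
  simp only [e, sum_add_distrib, sum_sub_distrib, ← mul_sum, h.1, h.2, sum_const, card_univ,
    Fintype.card_fin, nsmul_eq_mul, Nat.cast_ofNat]
  ring

theorem mem_Icc_one_two (h : IsConicClass a b) (ha : a = 4 ∨ a = 5) (i : Fin 7) :
    1 ≤ b i ∧ b i ≤ 2 := by
  have hsum : ∑ i, (b i - 1) * (b i - 1 - 1) = 0 := by
    simp only [sub_sub, one_add_one_eq_two, h.sum_sub_one_mul_sub_two]
    rcases ha with rfl | rfl <;> rfl
  have := Int.mem_Icc_of_sum_mul_sub_one_eq_zero hsum (mem_univ i)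
  omega

theorem eq_of_three (h : IsConicClass 3 b) (hb : Antitone b) (hb0 : ∀ i, 0 ≤ b i) :
    b = ![2, 1, 1, 1, 1, 1, 0] := by
  have h01 := h.sum_mul_sub_one
  have h12 := h.sum_sub_one_mul_sub_two
  have hs := h.2
  simp only [Fin.sum_univ_seven] at h01 h12 hs
  rw [Fin.antitone_iff_seven] at hb
  rw [Fin.forall_fin_seven] at hb0
  -- `b 1 ≥ 2` would make the two leading terms of `Σ bᵢ(bᵢ - 1) = 2` at least `2` each.
  have hb1 : b 1 ≤ 1 := by
    nlinarith [(b 2).mul_sub_one_nonneg, (b 3).mul_sub_one_nonneg, (b 4).mul_sub_one_nonneg,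
      (b 5).mul_sub_one_nonneg, (b 6).mul_sub_one_nonneg]
  -- `b 5 ≤ 0` would make the two trailing terms of `Σ (bᵢ - 1)(bᵢ - 2) = 2` equal to `2` each.
  have hb5 : 1 ≤ b 5 := by
    nlinarith [(b 0 - 1).mul_sub_one_nonneg, (b 1 - 1).mul_sub_one_nonneg,
      (b 2 - 1).mul_sub_one_nonneg, (b 3 - 1).mul_sub_one_nonneg, (b 4 - 1).mul_sub_one_nonneg]
  have hb6 : b 6 = 0 := by nlinarith
  simp only [funext_iff, Fin.forall_fin_seven, Matrix.cons_val]
  omega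

theorem eq_of_antitone (h : IsConicClass a b) (hb : Antitone b) (hb0 : ∀ i, 0 ≤ b i) :
    (a = 1 ∧ b = ![1, 0, 0, 0, 0, 0, 0]) ∨
    (a = 2 ∧ b = ![1, 1, 1, 1, 0, 0, 0]) ∨
    (a = 3 ∧ b = ![2, 1, 1, 1, 1, 1, 0]) ∨
    (a = 4 ∧ b = ![2, 2, 2, 1, 1, 1, 1]) ∨
    (a = 5 ∧ b = ![2, 2, 2, 2, 2, 2, 1]) := by
  have hs := h.2
  have hchain := Fin.antitone_iff_seven.mp hb
  simp only [Fin.sum_univ_seven] at hs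
  have := h.one_le hb0
  have := h.le_five
  obtain ha | rfl | ha : (a = 1 ∨ a = 2) ∨ a = 3 ∨ (a = 4 ∨ a = 5) := by omega
  · have hi := Fin.forall_fin_seven.mp (h.mem_Icc_zero_one ha)
    simp only [funext_iff, Fin.forall_fin_seven, Matrix.cons_val]
    rcases ha with rfl | rfl
    · exact Or.inl ⟨rfl, by omega⟩
    · exact Or.inr <| Or.inl ⟨rfl, by omega⟩
  · exact Or.inr <| Or.inr <| Or.inl ⟨rfl, h.eq_of_three hb hb0⟩
  · have hi := Fin.forall_fin_seven.mp (h.mem_Icc_one_two ha)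
    simp only [funext_iff, Fin.forall_fin_seven, Matrix.cons_val]
    rcases ha with rfl | rfl
    · exact Or.inr <| Or.inr <| Or.inr <| Or.inl ⟨rfl, by omega⟩
    · exact Or.inr <| Or.inr <| Or.inr <| Or.inr ⟨rfl, by omega⟩

end IsConicClass

theorem stmt_2_general (a : ℤ) (b : Fin 7 → ℤ) (hb : ∀ i, 0 ≤ b i) :
    (∑ i, (b i) ^ 2 = a ^ 2 ∧ ∑ i, b i = 3 * a - 2) ↔
      ∃ σ : Equiv.Perm (Fin 7),
        (a = 1 ∧ b ∘ ⇑σ = ![1, 0, 0, 0, 0, 0, 0]) ∨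
        (a = 2 ∧ b ∘ ⇑σ = ![1, 1, 1, 1, 0, 0, 0]) ∨
        (a = 3 ∧ b ∘ ⇑σ = ![2, 1, 1, 1, 1, 1, 0]) ∨
        (a = 4 ∧ b ∘ ⇑σ = ![2, 2, 2, 1, 1, 1, 1]) ∨
        (a = 5 ∧ b ∘ ⇑σ = ![2, 2, 2, 2, 2, 2, 1]) := by
  change IsConicClass a b ↔ _
  constructor
  · intro h
    obtain ⟨σ, hσ⟩ := Tuple.exists_perm_antitone b
    exact ⟨σ, ((IsConicClass.comp_perm_iff σ).mpr h).eq_of_antitone hσ fun i ↦ hb (σ i)⟩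
  · rintro ⟨σ, hσ⟩
    rw [← IsConicClass.comp_perm_iff σ]
    rcases hσ with ⟨rfl, hσ⟩ | ⟨rfl, hσ⟩ | ⟨rfl, hσ⟩ | ⟨rfl, hσ⟩ | ⟨rfl, hσ⟩ <;>
      rw [hσ] <;> simp [IsConicClass, Fin.sum_univ_succ]

/-- Classification of Theorem 4.1: for `a ≥ 1` and nonnegative `b₁,…,b₇`, the
equations `Σ bᵢ² = a²` and `Σ bᵢ = 3a − 2` hold iff, after a permutation of the
indices, `(a; b)` is one of the five listed tuples. -/
theorem stmt_2 (a : ℤ) (b : Fin 7 → ℤ) (ha : 1 ≤ a) (hb : ∀ i, 0 ≤ b i) :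
    (∑ i, (b i) ^ 2 = a ^ 2 ∧ ∑ i, b i = 3 * a - 2) ↔
      ∃ σ : Equiv.Perm (Fin 7),
        (a = 1 ∧ b ∘ ⇑σ = ![1, 0, 0, 0, 0, 0, 0]) ∨
        (a = 2 ∧ b ∘ ⇑σ = ![1, 1, 1, 1, 0, 0, 0]) ∨
        (a = 3 ∧ b ∘ ⇑σ = ![2, 1, 1, 1, 1, 1, 0]) ∨
        (a = 4 ∧ b ∘ ⇑σ = ![2, 2, 2, 1, 1, 1, 1]) ∨
        (a = 5 ∧ b ∘ ⇑σ = ![2, 2, 2, 2, 2, 2, 1]) :=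
  stmt_2_general a b hb
end

section
/- The set of vectors (a, b₁,…,b₇) ∈ ℤ⁸ with a ≥ 0 satisfying a² − (b₁²+⋯+b₇²) = −2 and 3a = b₁+⋯+b₇ is exactly the union of the following three families: (i) a = 0 and b = e_j − e_i for some i ≠ j; (ii) a = 1 and b = e_i + e_j + e_k for three distinct indices i, j, k; (iii) a = 2 and b = Σ_{l≠i} e_l for some index i, i.e. six coordinates equal 1 and one equal 0. In particular a ≤ 2 and the set has exactly 42 + 35 + 7 = 84 elements. Here e_i denotes the i-th standard basis vector of ℤ⁷. -/
open Finset

section ClassifyAux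

lemma sum01 (f : Fin 7 → ℤ) (hf : ∀ i, f i = 0 ∨ f i = 1) :
    ∑ i, f i = ((univ : Finset (Fin 7)).filter fun i => f i = 1).card := by
  have : ∀ i ∈ (univ : Finset (Fin 7)), f i = if f i = 1 then (1:ℤ) else 0 := by
    intro i _; rcases hf i with h | h <;> simp [h]
  rw [Finset.sum_congr rfl this, Finset.sum_boole]

lemma bound7 (a : ℤ) (b : Fin 7 → ℤ) (ha : 0 ≤ a)
    (h2 : a ^ 2 - ∑ i, (b i) ^ 2 = -2) (h3 : 3 * a = ∑ i, b i) : a ≤ 2 := by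
  rw [Fin.sum_univ_seven] at h2 h3
  have h9 : 9 * a ^ 2 = (b 0 + b 1 + b 2 + b 3 + b 4 + b 5 + b 6) ^ 2 := by
    rw [← h3]; ring
  have hid : (b 0 - b 1)^2 + (b 0 - b 2)^2 + (b 0 - b 3)^2 + (b 0 - b 4)^2 +
      (b 0 - b 5)^2 + (b 0 - b 6)^2 + (b 1 - b 2)^2 + (b 1 - b 3)^2 + (b 1 - b 4)^2 +
      (b 1 - b 5)^2 + (b 1 - b 6)^2 + (b 2 - b 3)^2 + (b 2 - b 4)^2 + (b 2 - b 5)^2 +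
      (b 2 - b 6)^2 + (b 3 - b 4)^2 + (b 3 - b 5)^2 + (b 3 - b 6)^2 + (b 4 - b 5)^2 +
      (b 4 - b 6)^2 + (b 5 - b 6)^2 = 14 - 2 * a ^ 2 := by
    linear_combination (-7) * h2 + h9
  have hnn : (0:ℤ) ≤ (b 0 - b 1)^2 + (b 0 - b 2)^2 + (b 0 - b 3)^2 + (b 0 - b 4)^2 +
      (b 0 - b 5)^2 + (b 0 - b 6)^2 + (b 1 - b 2)^2 + (b 1 - b 3)^2 + (b 1 - b 4)^2 +
      (b 1 - b 5)^2 + (b 1 - b 6)^2 + (b 2 - b 3)^2 + (b 2 - b 4)^2 + (b 2 - b 5)^2 +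
      (b 2 - b 6)^2 + (b 3 - b 4)^2 + (b 3 - b 5)^2 + (b 3 - b 6)^2 + (b 4 - b 5)^2 +
      (b 4 - b 6)^2 + (b 5 - b 6)^2 := by positivity
  have key : a ^ 2 ≤ 7 := by linarith [hid, hnn]
  by_contra h
  push_neg at h
  have h3a : (3:ℤ) ≤ a := h
  have hsq : (3:ℤ) * 3 ≤ a * a := mul_le_mul h3a h3a (by norm_num) (by linarith)
  have hs : a ^ 2 = a * a := sq a
  linarith

lemma three_ones (f : Fin 7 → ℤ) (hf : ∀ i, f i = 0 ∨ f i = 1)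
    (hc : ((univ : Finset (Fin 7)).filter fun i => f i = 1).card = 3) :
    ∃ i j k : Fin 7, i ≠ j ∧ i ≠ k ∧ j ≠ k ∧
      f = Pi.single i 1 + Pi.single j 1 + Pi.single k 1 := by
  obtain ⟨i, j, k, hij, hik, hjk, hs⟩ := Finset.card_eq_three.mp hc
  refine ⟨i, j, k, hij, hik, hjk, funext fun x => ?_⟩
  have hx : f x = 1 ↔ (x = i ∨ x = j ∨ x = k) := by
    rw [show (x = i ∨ x = j ∨ x = k) ↔ x ∈ ({i, j, k} : Finset (Fin 7)) by simp, ← hs]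
    simp
  simp only [Pi.add_apply, Pi.single_apply]
  rcases hf x with h | h <;>
    · rw [h] at hx
      split_ifs with h1 h2 h3 <;> simp_all

lemma six_ones (f : Fin 7 → ℤ) (hf : ∀ i, f i = 0 ∨ f i = 1)
    (hc : ((univ : Finset (Fin 7)).filter fun i => f i = 1).card = 6) :
    ∃ i : Fin 7, f = fun l => if l = i then 0 else 1 := by
  have hcc : ((univ : Finset (Fin 7)).filter fun i => f i = 1)ᶜ.card = 1 := by
    rw [Finset.card_compl, hc]; rfl
  obtain ⟨i, hi⟩ := Finset.card_eq_one.mp hcc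
  refine ⟨i, funext fun x => ?_⟩
  have hx : ¬ (f x = 1) ↔ x = i := by
    rw [show (x = i) ↔ x ∈ ({i} : Finset (Fin 7)) by simp, ← hi]
    simp
  rcases hf x with h | h <;> rw [h] at hx ⊢ <;> by_cases hxi : x = i <;> simp_all

lemma one_one_minus (f : Fin 7 → ℤ) (hf : ∀ i, f i = -1 ∨ f i = 0 ∨ f i = 1)
    (h2 : ∑ i, (f i) ^ 2 = 2) (h3 : ∑ i, f i = 0) :
    ∃ i j : Fin 7, i ≠ j ∧ f = Pi.single j 1 - Pi.single i 1 := by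
  classical
  have hsum1 : ∑ i, f i = (((univ : Finset (Fin 7)).filter fun i => f i = 1).card : ℤ)
      - (((univ : Finset (Fin 7)).filter fun i => f i = -1).card : ℤ) := by
    have e : ∀ i ∈ (univ : Finset (Fin 7)),
        f i = (if f i = 1 then (1:ℤ) else 0) - (if f i = -1 then (1:ℤ) else 0) := by
      intro i _; rcases hf i with h | h | h <;> simp [h]
    rw [Finset.sum_congr rfl e, Finset.sum_sub_distrib, Finset.sum_boole, Finset.sum_boole]
  have hsum2 : ∑ i, (f i) ^ 2 = (((univ : Finset (Fin 7)).filter fun i => f i = 1).card : ℤ)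
      + (((univ : Finset (Fin 7)).filter fun i => f i = -1).card : ℤ) := by
    have e : ∀ i ∈ (univ : Finset (Fin 7)),
        (f i) ^ 2 = (if f i = 1 then (1:ℤ) else 0) + (if f i = -1 then (1:ℤ) else 0) := by
      intro i _; rcases hf i with h | h | h <;> norm_num [h]
    rw [Finset.sum_congr rfl e, Finset.sum_add_distrib, Finset.sum_boole, Finset.sum_boole]
  rw [h3] at hsum1; rw [h2] at hsum2
  have hp : ((univ : Finset (Fin 7)).filter fun i => f i = 1).card = 1 := by omega
  have hn : ((univ : Finset (Fin 7)).filter fun i => f i = -1).card = 1 := by omega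
  obtain ⟨j, hj⟩ := Finset.card_eq_one.mp hp
  obtain ⟨i, hi⟩ := Finset.card_eq_one.mp hn
  have hji : f j = 1 := by
    have : j ∈ (univ : Finset (Fin 7)).filter fun i => f i = 1 := hj ▸ Finset.mem_singleton_self j
    simpa using this
  have hii : f i = -1 := by
    have : i ∈ (univ : Finset (Fin 7)).filter fun i => f i = -1 := hi ▸ Finset.mem_singleton_self i
    simpa using this
  have hij : i ≠ j := fun h => by rw [h, hji] at hii; omega
  refine ⟨i, j, hij, funext fun x => ?_⟩
  have hx1 : f x = 1 ↔ x = j := by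
    rw [show (x = j) ↔ x ∈ ({j} : Finset (Fin 7)) by simp, ← hj]; simp
  have hx2 : f x = -1 ↔ x = i := by
    rw [show (x = i) ↔ x ∈ ({i} : Finset (Fin 7)) by simp, ← hi]; simp
  simp only [Pi.sub_apply, Pi.single_apply]
  by_cases hxj : x = j
  · subst hxj
    simp [hji, Ne.symm hij, fun h : x = i => hij (h ▸ rfl)]
  · by_cases hxi : x = i
    · subst hxi
      simp [hii, hxj]
    · have h0 : f x = 0 := by
        rcases hf x with h | h | h
        · exact absurd (hx2.mp h) hxi
        · exact h
        · exact absurd (hx1.mp h) hxj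
      simp [h0, hxj, hxi]

lemma fam1_sum (i j : Fin 7) :
    ∑ x, (Pi.single j 1 - Pi.single i 1 : Fin 7 → ℤ) x = 0 := by
  simp only [Pi.sub_apply, Finset.sum_sub_distrib]
  rw [Fintype.sum_pi_single' j (1:ℤ), Fintype.sum_pi_single' i (1:ℤ)]
  ring

lemma fam1_sq (i j : Fin 7) (hij : i ≠ j) :
    ∑ x, ((Pi.single j 1 - Pi.single i 1 : Fin 7 → ℤ) x) ^ 2 = 2 := by
  have e : ∀ x ∈ (univ : Finset (Fin 7)),
      ((Pi.single j 1 - Pi.single i 1 : Fin 7 → ℤ) x) ^ 2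
        = (Pi.single j 1 : Fin 7 → ℤ) x + (Pi.single i 1 : Fin 7 → ℤ) x := by
    intro x _
    simp only [Pi.sub_apply, Pi.single_apply]
    by_cases hxj : x = j <;> by_cases hxi : x = i <;>
      simp_all [Ne.symm hij]
  rw [Finset.sum_congr rfl e, Finset.sum_add_distrib,
    Fintype.sum_pi_single' j (1:ℤ), Fintype.sum_pi_single' i (1:ℤ)]
  norm_num

lemma fam2_sum (i j k : Fin 7) :
    ∑ x, (Pi.single i 1 + Pi.single j 1 + Pi.single k 1 : Fin 7 → ℤ) x = 3 := by
  simp only [Pi.add_apply, Finset.sum_add_distrib]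
  rw [Fintype.sum_pi_single' i (1:ℤ), Fintype.sum_pi_single' j (1:ℤ),
    Fintype.sum_pi_single' k (1:ℤ)]
  norm_num

lemma fam2_sq (i j k : Fin 7) (hij : i ≠ j) (hik : i ≠ k) (hjk : j ≠ k) :
    ∑ x, ((Pi.single i 1 + Pi.single j 1 + Pi.single k 1 : Fin 7 → ℤ) x) ^ 2 = 3 := by
  have e : ∀ x ∈ (univ : Finset (Fin 7)),
      ((Pi.single i 1 + Pi.single j 1 + Pi.single k 1 : Fin 7 → ℤ) x) ^ 2
        = (Pi.single i 1 : Fin 7 → ℤ) x + (Pi.single j 1 : Fin 7 → ℤ) x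
          + (Pi.single k 1 : Fin 7 → ℤ) x := by
    intro x _
    simp only [Pi.add_apply, Pi.single_apply]
    by_cases hxi : x = i <;> by_cases hxj : x = j <;> by_cases hxk : x = k <;>
      simp_all [Ne.symm hij, Ne.symm hik, Ne.symm hjk]
  rw [Finset.sum_congr rfl e, Finset.sum_add_distrib, Finset.sum_add_distrib,
    Fintype.sum_pi_single' i (1:ℤ), Fintype.sum_pi_single' j (1:ℤ),
    Fintype.sum_pi_single' k (1:ℤ)]
  norm_num

lemma fam3_sum (i : Fin 7) :
    ∑ x : Fin 7, (if x = i then (0:ℤ) else 1) = 6 := by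
  have e : ∀ x ∈ (univ : Finset (Fin 7)),
      (if x = i then (0:ℤ) else 1) = 1 - (if x = i then (1:ℤ) else 0) := by
    intro x _; by_cases h : x = i <;> simp [h]
  rw [Finset.sum_congr rfl e, Finset.sum_sub_distrib, Finset.sum_const,
    Finset.sum_ite_eq' univ i (fun _ => (1:ℤ)), if_pos (mem_univ i)]
  norm_num

lemma fam3_sq (i : Fin 7) :
    ∑ x : Fin 7, (if x = i then (0:ℤ) else 1) ^ 2 = 6 := by
  have e : ∀ x ∈ (univ : Finset (Fin 7)),
      (if x = i then (0:ℤ) else 1) ^ 2 = (if x = i then (0:ℤ) else 1) := by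
    intro x _; by_cases h : x = i <;> simp [h]
  rw [Finset.sum_congr rfl e, fam3_sum]

lemma classify7 (a : ℤ) (b : Fin 7 → ℤ) :
    (0 ≤ a ∧ a ^ 2 - ∑ i, (b i) ^ 2 = -2 ∧ 3 * a = ∑ i, b i) ↔
      ((a = 0 ∧ ∃ i j : Fin 7, i ≠ j ∧ b = Pi.single j 1 - Pi.single i 1) ∨
       (a = 1 ∧ ∃ i j k : Fin 7, i ≠ j ∧ i ≠ k ∧ j ≠ k ∧
          b = Pi.single i 1 + Pi.single j 1 + Pi.single k 1) ∨
       (a = 2 ∧ ∃ i : Fin 7, b = fun l => if l = i then 0 else 1)) := by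
  constructor
  · rintro ⟨ha, h2, h3⟩
    have hb2 := bound7 a b ha h2 h3
    interval_cases a
    · -- a = 0
      have h2' : ∑ i, (b i) ^ 2 = 2 := by linarith
      have h3' : ∑ i, b i = 0 := by linarith
      have hf : ∀ i, b i = -1 ∨ b i = 0 ∨ b i = 1 := by
        intro i
        have h1 : (b i) ^ 2 ≤ 2 := by
          have hsl : (b i) ^ 2 ≤ ∑ j, (b j) ^ 2 := by
            simpa using Finset.single_le_sum (f := fun j => (b j) ^ 2)
              (fun j _ => sq_nonneg (b j)) (Finset.mem_univ i)
          linarith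
        have hup : b i ≤ 1 := by nlinarith
        have hlo : -1 ≤ b i := by nlinarith
        omega
      exact Or.inl ⟨rfl, one_one_minus b hf h2' h3'⟩
    · -- a = 1
      have h2' : ∑ i, (b i) ^ 2 = 3 := by linarith
      have h3' : ∑ i, b i = 3 := by linarith
      have hnn : ∀ j ∈ (univ : Finset (Fin 7)), (0:ℤ) ≤ (b j) ^ 2 - b j := by
        intro j _
        rcases le_or_gt (b j) 0 with h | h
        · nlinarith
        · nlinarith
      have hzero : ∑ j, ((b j) ^ 2 - b j) = 0 := by
        rw [Finset.sum_sub_distrib, h2', h3']; ring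
      have hf : ∀ i, b i = 0 ∨ b i = 1 := by
        intro i
        have he := (Finset.sum_eq_zero_iff_of_nonneg hnn).mp hzero i (Finset.mem_univ i)
        have hm : b i * (b i - 1) = 0 := by linear_combination he
        rcases mul_eq_zero.mp hm with h | h
        · exact Or.inl h
        · exact Or.inr (by omega)
      have hcard : ((univ : Finset (Fin 7)).filter fun i => b i = 1).card = 3 := by
        have := sum01 b hf
        rw [h3'] at this
        exact_mod_cast this.symm
      exact Or.inr (Or.inl ⟨rfl, three_ones b hf hcard⟩)
    · -- a = 2
      have h2' : ∑ i, (b i) ^ 2 = 6 := by linarith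
      have h3' : ∑ i, b i = 6 := by linarith
      have hnn : ∀ j ∈ (univ : Finset (Fin 7)), (0:ℤ) ≤ (b j) ^ 2 - b j := by
        intro j _
        rcases le_or_gt (b j) 0 with h | h
        · nlinarith
        · nlinarith
      have hzero : ∑ j, ((b j) ^ 2 - b j) = 0 := by
        rw [Finset.sum_sub_distrib, h2', h3']; ring
      have hf : ∀ i, b i = 0 ∨ b i = 1 := by
        intro i
        have he := (Finset.sum_eq_zero_iff_of_nonneg hnn).mp hzero i (Finset.mem_univ i)
        have hm : b i * (b i - 1) = 0 := by linear_combination he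
        rcases mul_eq_zero.mp hm with h | h
        · exact Or.inl h
        · exact Or.inr (by omega)
      have hcard : ((univ : Finset (Fin 7)).filter fun i => b i = 1).card = 6 := by
        have := sum01 b hf
        rw [h3'] at this
        exact_mod_cast this.symm
      exact Or.inr (Or.inr ⟨rfl, six_ones b hf hcard⟩)
  · rintro (⟨ha, i, j, hij, hb⟩ | ⟨ha, i, j, k, hij, hik, hjk, hb⟩ | ⟨ha, i, hb⟩) <;>
      subst ha <;> subst hb
    · refine ⟨by norm_num, ?_, ?_⟩
      · rw [fam1_sq i j hij]; norm_num
      · rw [fam1_sum i j]; norm_num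
    · refine ⟨by norm_num, ?_, ?_⟩
      · rw [fam2_sq i j k hij hik hjk]; norm_num
      · rw [fam2_sum i j k]; norm_num
    · refine ⟨by norm_num, ?_, ?_⟩
      · show (2:ℤ) ^ 2 - ∑ x : Fin 7, (if x = i then (0:ℤ) else 1) ^ 2 = -2
        rw [fam3_sq i]; norm_num
      · show 3 * (2:ℤ) = ∑ x : Fin 7, (if x = i then (0:ℤ) else 1)
        rw [fam3_sum i]; norm_num

end ClassifyAux

section MainAux

lemma fam1_bound (i j x : Fin 7) :
    (Pi.single j 1 - Pi.single i 1 : Fin 7 → ℤ) x ∈ Finset.Icc (-1:ℤ) 1 := by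
  simp only [Pi.sub_apply, Pi.single_apply, Finset.mem_Icc]
  split_ifs <;> norm_num

lemma fam2_bound (i j k x : Fin 7) (hij : i ≠ j) (hik : i ≠ k) (hjk : j ≠ k) :
    (Pi.single i 1 + Pi.single j 1 + Pi.single k 1 : Fin 7 → ℤ) x ∈ Finset.Icc (-1:ℤ) 1 := by
  simp only [Pi.add_apply, Pi.single_apply, Finset.mem_Icc]
  by_cases hxi : x = i <;> by_cases hxj : x = j <;> by_cases hxk : x = k <;>
    simp_all [Ne.symm hij, Ne.symm hik, Ne.symm hjk]

lemma fam3_bound (i x : Fin 7) :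
    (if x = i then (0:ℤ) else 1) ∈ Finset.Icc (-1:ℤ) 1 := by
  split_ifs <;> simp

set_option maxRecDepth 100000 in
set_option maxHeartbeats 2000000 in
lemma card84 : ((Finset.Icc (0:ℤ) 2 ×ˢ Fintype.piFinset fun _ : Fin 7 => Finset.Icc (-1:ℤ) 1).filter
    (fun p : ℤ × (Fin 7 → ℤ) =>
      0 ≤ p.1 ∧ p.1 ^ 2 - ∑ i, (p.2 i) ^ 2 = -2 ∧ 3 * p.1 = ∑ i, p.2 i)).card = 84 := by
  decide

end MainAux

/-- Classification of `(−2)`-classes: the vectors `(a; b₁,…,b₇)` with `a ≥ 0`,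
`a² − Σ bᵢ² = −2` and `3a = Σ bᵢ` form exactly the union of the families
`Eᵢ − E_j` (a = 0, b = e_j − eᵢ, i ≠ j), `π*H − Eᵢ − E_j − E_k` (a = 1,
b = eᵢ + e_j + e_k with i, j, k distinct), and `2π*H − Σ` of six exceptional
classes (a = 2, six coordinates 1 and one 0); in particular `a ≤ 2` and there
are exactly `42 + 35 + 7 = 84` such vectors. -/
theorem stmt_7 :
    {p : ℤ × (Fin 7 → ℤ) |
        0 ≤ p.1 ∧ p.1 ^ 2 - ∑ i, (p.2 i) ^ 2 = -2 ∧
        3 * p.1 = ∑ i, p.2 i} =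
      {p : ℤ × (Fin 7 → ℤ) |
        (p.1 = 0 ∧ ∃ i j : Fin 7, i ≠ j ∧
          p.2 = Pi.single j 1 - Pi.single i 1) ∨
        (p.1 = 1 ∧ ∃ i j k : Fin 7, i ≠ j ∧ i ≠ k ∧ j ≠ k ∧
          p.2 = Pi.single i 1 + Pi.single j 1 + Pi.single k 1) ∨
        (p.1 = 2 ∧ ∃ i : Fin 7, p.2 = fun l => if l = i then 0 else 1)} ∧
    (∀ p : ℤ × (Fin 7 → ℤ),
        0 ≤ p.1 → p.1 ^ 2 - ∑ i, (p.2 i) ^ 2 = -2 → 3 * p.1 = ∑ i, p.2 i →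
        p.1 ≤ 2) ∧
    {p : ℤ × (Fin 7 → ℤ) |
        0 ≤ p.1 ∧ p.1 ^ 2 - ∑ i, (p.2 i) ^ 2 = -2 ∧
        3 * p.1 = ∑ i, p.2 i}.ncard = 84 := by
  refine ⟨?_, fun p h1 h2 h3 => bound7 p.1 p.2 h1 h2 h3, ?_⟩
  · ext ⟨a, b⟩
    simp only [Set.mem_setOf_eq]
    exact classify7 a b
  · have hF : {p : ℤ × (Fin 7 → ℤ) |
        0 ≤ p.1 ∧ p.1 ^ 2 - ∑ i, (p.2 i) ^ 2 = -2 ∧ 3 * p.1 = ∑ i, p.2 i} =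
        ↑((Finset.Icc (0:ℤ) 2 ×ˢ Fintype.piFinset fun _ : Fin 7 => Finset.Icc (-1:ℤ) 1).filter
          (fun p : ℤ × (Fin 7 → ℤ) =>
            0 ≤ p.1 ∧ p.1 ^ 2 - ∑ i, (p.2 i) ^ 2 = -2 ∧ 3 * p.1 = ∑ i, p.2 i)) := by
      ext p
      rw [Set.mem_setOf_eq, Finset.mem_coe, Finset.mem_filter]
      constructor
      · intro h
        refine ⟨?_, h⟩
        rw [Finset.mem_product]
        refine ⟨Finset.mem_Icc.mpr ⟨h.1, bound7 p.1 p.2 h.1 h.2.1 h.2.2⟩, ?_⟩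
        rw [Fintype.mem_piFinset]
        intro x
        rcases (classify7 p.1 p.2).mp h with ⟨_, i, j, hij, hb⟩ |
          ⟨_, i, j, k, hij, hik, hjk, hb⟩ | ⟨_, i, hb⟩
        · rw [hb]; exact fam1_bound i j x
        · rw [hb]; exact fam2_bound i j k x hij hik hjk
        · rw [hb]; exact fam3_bound i x
      · exact fun h => h.2
    rw [hF, Set.ncard_coe_finset, card84]
end
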